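/- arXiv:1104.5368 — 6 statements merged into one kernel-verified Lean document; each statement's English description precedes it below -/
import Mathlib

section
/- Let a bounded and monotonic routing metric be assigned over a finite connected system S with root r, and let B ⊆ V∖{r}. Then for every vertex v and every neighbor u of v, met( max^≺_{p∈B∪{r}} μ(u,p), wf({u,v}) ) ⪯ max^≺_{p∈B∪{r}} μ(v,p). -/
def MetBounded {M W : Type} [LinearOrder M] (met : M → W → M) : Prop :=
  ∀ m w, met m w ≤ m

def MetMonotonic {M W : Type} [LinearOrder M] (met : M → W → M) : Prop :=
  ∀ m m' w, m ≤ m' → met m w ≤ met m' w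

def MetStrictlyDecreasing {M W : Type} [LinearOrder M] (met : M → W → M) : Prop :=
  ∀ m : M, (∀ w, met m w < m) ∨ (∀ w, met m w = m)

def IsMetFixedPoint {M W : Type} (met : M → W → M) (m : M) : Prop :=
  ∀ w, met m w = m

/-- The metric value of a walk, computed from its start with initial value `m`. -/
def walkVal {M W V : Type} (met : M → W → M) (wf : V → V → W) {G : SimpleGraph V} :
    {u v : V} → G.Walk u v → M → M
  | _, _, SimpleGraph.Walk.nil, m => m
  | u, _, SimpleGraph.Walk.cons (v := x) _ q, m => walkVal met wf q (met m (wf u x))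

/-- `mu v p` is the maximum, over simple paths from `p` to `v`, of the path metric. -/
def IsMaxMetric {M W V : Type} [LinearOrder M] (met : M → W → M) (wf : V → V → W)
    (G : SimpleGraph V) (mr : M) (mu : V → V → M) : Prop :=
  ∀ v p : V,
    (∃ q : G.Walk p v, q.IsPath ∧ walkVal met wf q mr = mu v p) ∧
    (∀ q : G.Walk p v, q.IsPath → walkVal met wf q mr ≤ mu v p)


open SimpleGraph

lemma walkVal_le {M W V : Type} [LinearOrder M] {met : M → W → M} {wf : V → V → W}
    {G : SimpleGraph V} (hbound : MetBounded met) :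
    ∀ {u v : V} (q : G.Walk u v) (m : M), walkVal met wf q m ≤ m := by
  intro u v q
  induction q with
  | nil => intro m; simp [walkVal]
  | cons h q ih => intro m; exact le_trans (ih _) (hbound _ _)

lemma walkVal_append {M W V : Type} {met : M → W → M} {wf : V → V → W}
    {G : SimpleGraph V} :
    ∀ {u v x : V} (q1 : G.Walk u v) (q2 : G.Walk v x) (m : M),
      walkVal met wf (q1.append q2) m = walkVal met wf q2 (walkVal met wf q1 m) := by
  intro u v x q1
  induction q1 with
  | nil => intro q2 m; rfl
  | cons h q ih => intro q2 m; simp [walkVal, ih]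

lemma walkVal_concat {M W V : Type} {met : M → W → M} {wf : V → V → W}
    {G : SimpleGraph V} {u v x : V} (q : G.Walk u v) (h : G.Adj v x) (m : M) :
    walkVal met wf (q.concat h) m = met (walkVal met wf q m) (wf v x) := by
  rw [SimpleGraph.Walk.concat_eq_append, walkVal_append]; rfl

lemma key_lemma {M W V : Type} [LinearOrder M] [DecidableEq V]
    {met : M → W → M} {mr : M}
    (hbound : MetBounded met)
    {G : SimpleGraph V} {wf : V → V → W} {mu : V → V → M}
    (hmu : IsMaxMetric met wf G mr mu)
    {u v : V} (hadj : G.Adj u v) (p : V) :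
    met (mu u p) (wf u v) ≤ mu v p := by
  obtain ⟨q, hq, hval⟩ := (hmu u p).1
  by_cases hv : v ∈ q.support
  · have h1 : (q.takeUntil v hv).IsPath := hq.takeUntil hv
    have h2 : walkVal met wf (q.takeUntil v hv) mr ≤ mu v p := (hmu v p).2 _ h1
    have h3 : walkVal met wf q mr ≤ walkVal met wf (q.takeUntil v hv) mr := by
      conv_lhs => rw [← q.take_spec hv]
      rw [walkVal_append]
      exact walkVal_le hbound _ _
    calc met (mu u p) (wf u v) ≤ mu u p := hbound _ _
      _ = walkVal met wf q mr := hval.symm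
      _ ≤ _ := le_trans h3 h2
  · have hpath : (q.concat hadj).IsPath := by
      rw [← SimpleGraph.Walk.isPath_reverse_iff, SimpleGraph.Walk.reverse_concat,
        SimpleGraph.Walk.cons_isPath_iff]
      refine ⟨hq.reverse, ?_⟩
      simpa using hv
    have := (hmu v p).2 _ hpath
    rw [walkVal_concat, hval] at this
    exact this

/-- For a bounded monotonic metric assigned over a finite connected
system with root `r` and Byzantine set `B ⊆ V∖{r}`:
`met (max_{p∈B∪{r}} μ(u,p)) (wf {u,v}) ⪯ max_{p∈B∪{r}} μ(v,p)` for every edge `{u,v}`. -/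
theorem statement_1 {M W V : Type} [LinearOrder M] [Fintype V] [DecidableEq V]
    (met : M → W → M) (mr : M) (hmr : ∀ m : M, m ≤ mr)
    (hbound : MetBounded met) (hmono : MetMonotonic met)
    (G : SimpleGraph V) (hconn : G.Connected) (r : V)
    (wf : V → V → W) (hwf : ∀ u v : V, wf u v = wf v u)
    (mu : V → V → M) (hmu : IsMaxMetric met wf G mr mu)
    (B : Finset V) (hrB : r ∉ B) :
    ∀ v u : V, G.Adj u v →
      met ((insert r B).sup' (Finset.insert_nonempty r B) (fun p => mu u p)) (wf u v)
        ≤ (insert r B).sup' (Finset.insert_nonempty r B) (fun p => mu v p) := by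
  
  intro v u hadj
  obtain ⟨p0, hp0, hsup⟩ := Finset.exists_mem_eq_sup' (Finset.insert_nonempty r B) (fun p => mu u p)
  rw [hsup]
  exact le_trans (key_lemma hbound hmu hadj p0)
    (Finset.le_sup' (fun p => mu v p) hp0)
end

section
/- Let a bounded and monotonic routing metric be assigned over a finite connected system S with root r. Then for every vertex v ≠ r there exists a simple path r = u_0, u_1, …, u_k = v such that for every index i ∈ {0,…,k}, the metric of the prefix path (u_0,…,u_i) computed from r equals μ(u_i, r); in particular every prefix of this path is a maximum metric path. -/
/-!
Call a vertex `u` good if some path from `r` to `u` has all its prefixes maximal. Suppose some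
vertex is bad and pick a bad `v` with `μ(v, r)` maximal. A maximal path from `r` to `v` leaves
the good set along an edge `xy`; boundedness and monotonicity give
`μ(v, r) ≤ met(μ(x, r), wf(x, y)) ≤ μ(y, r)`, and maximality of `v` turns this into
`μ(y, r) = met(μ(x, r), wf(x, y))`. Extending a good path to `x` by `y` then makes `y` good
(if `y` already lies on that path, the prefix ending at `y` does).
-/

open SimpleGraph Walk

theorem SimpleGraph.Walk.concat_eq_append_cases {V : Type*} {G : SimpleGraph V} {a b c u : V}
    {q : G.Walk a b} {h : G.Adj b c} {q₁ : G.Walk a u} {q₂ : G.Walk u c}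
    (he : q.concat h = q₁.append q₂) :
    (∃ q₂' : G.Walk u b, q = q₁.append q₂') ∨ ∃ hu : u = c, q₁.copy rfl hu = q.concat h := by
  induction q₂ using Walk.concatRec with
  | Hnil => exact Or.inr ⟨rfl, by simpa using he.symm⟩
  | Hconcat p h' _ =>
    rw [append_concat] at he
    obtain ⟨rfl, hq⟩ := concat_inj he
    exact Or.inl ⟨p, hq⟩

section WalkVal

variable {M W V : Type} (met : M → W → M) (wf : V → V → W) {G : SimpleGraph V}

theorem walkVal_append_s4 {a b c : V} (p : G.Walk a b) (q : G.Walk b c) (m : M) :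
    walkVal met wf (p.append q) m = walkVal met wf q (walkVal met wf p m) := by
  induction p generalizing m with
  | nil => rfl
  | cons h p ih => exact ih q _

theorem walkVal_concat_s4 {a b c : V} (p : G.Walk a b) (h : G.Adj b c) (m : M) :
    walkVal met wf (p.concat h) m = met (walkVal met wf p m) (wf b c) :=
  walkVal_append_s4 met wf p _ m

variable [LinearOrder M] {met}

theorem MetBounded.walkVal_le (hbound : MetBounded met) {a b : V} (p : G.Walk a b) (m : M) :
    walkVal met wf p m ≤ m := by
  induction p generalizing m with
  | nil => exact le_rfl
  | cons h p ih => exact (ih _).trans (hbound _ _)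

theorem MetMonotonic.walkVal_mono (hmono : MetMonotonic met) {a b : V} (p : G.Walk a b)
    {m m' : M} (hm : m ≤ m') : walkVal met wf p m ≤ walkVal met wf p m' := by
  induction p generalizing m m' with
  | nil => exact hm
  | cons h p ih => exact ih (hmono _ _ _ hm)

end WalkVal

section MaxPrefix

variable {M W V : Type} {met : M → W → M} {wf : V → V → W} {G : SimpleGraph V}
  {mr : M} {mu : V → V → M}

variable (met wf mr mu) in
def IsMaxPrefixWalk {r v : V} (q : G.Walk r v) : Prop :=
  ∀ (u : V) (q₁ : G.Walk r u) (q₂ : G.Walk u v),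
    q = q₁.append q₂ → walkVal met wf q₁ mr = mu u r

theorem isMaxPrefixWalk_nil {r : V} (hr : mu r r = mr) :
    IsMaxPrefixWalk met wf mr mu (nil : G.Walk r r) := by
  intro u q₁ q₂ he
  cases q₁ with
  | nil => exact hr.symm
  | cons => cases he

theorem IsMaxPrefixWalk.of_append {r u v : V} {q₁ : G.Walk r u} {q₂ : G.Walk u v}
    (hq : IsMaxPrefixWalk met wf mr mu (q₁.append q₂)) : IsMaxPrefixWalk met wf mr mu q₁ :=
  fun w p₁ p₂ he => hq w p₁ (p₂.append q₂) (by rw [he, append_assoc])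

theorem IsMaxPrefixWalk.concat {r b c : V} {q : G.Walk r b}
    (hq : IsMaxPrefixWalk met wf mr mu q) (h : G.Adj b c) (hc : met (mu b r) (wf b c) = mu c r) :
    IsMaxPrefixWalk met wf mr mu (q.concat h) := by
  intro u q₁ q₂ he
  rcases concat_eq_append_cases he with ⟨q₂', hq'⟩ | ⟨rfl, hq₁⟩
  · exact hq u q₁ q₂' hq'
  · rw [copy_rfl_rfl] at hq₁
    rw [hq₁, walkVal_concat_s4, hq b q nil (append_nil q).symm, hc]

theorem exists_isPath_isMaxPrefixWalk_of_adj {r x y : V}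
    (hx : ∃ q : G.Walk r x, q.IsPath ∧ IsMaxPrefixWalk met wf mr mu q) (h : G.Adj x y)
    (hxy : met (mu x r) (wf x y) = mu y r) :
    ∃ q : G.Walk r y, q.IsPath ∧ IsMaxPrefixWalk met wf mr mu q := by
  classical
  obtain ⟨q, hq, hmax⟩ := hx
  by_cases hy : y ∈ q.support
  · rw [← q.take_spec hy] at hmax
    exact ⟨q.takeUntil y hy, hq.takeUntil hy, hmax.of_append⟩
  · exact ⟨q.concat h, hq.concat hy h, hmax.concat h hxy⟩

end MaxPrefix

namespace IsMaxMetric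

variable {M W V : Type} [LinearOrder M] {met : M → W → M} {wf : V → V → W} {G : SimpleGraph V}
  {mr : M} {mu : V → V → M}

theorem self_eq (hbound : MetBounded met) (hmu : IsMaxMetric met wf G mr mu) (r : V) :
    mu r r = mr := by
  obtain ⟨⟨p, -, hp⟩, hle⟩ := hmu r r
  exact le_antisymm (hp ▸ hbound.walkVal_le wf p mr) (hle nil IsPath.nil)

theorem met_le_of_adj (hbound : MetBounded met) (hmu : IsMaxMetric met wf G mr mu) {r a c : V}
    (h : G.Adj a c) : met (mu a r) (wf a c) ≤ mu c r := by
  classical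
  obtain ⟨⟨p, hp, hval⟩, -⟩ := hmu a r
  rw [← hval]
  by_cases hc : c ∈ p.support
  · calc met (walkVal met wf p mr) (wf a c)
        ≤ walkVal met wf ((p.takeUntil c hc).append (p.dropUntil c hc)) mr := by
          rw [p.take_spec hc]; exact hbound _ _
      _ ≤ walkVal met wf (p.takeUntil c hc) mr := by
          rw [walkVal_append_s4]; exact hbound.walkVal_le wf _ _
      _ ≤ mu c r := (hmu c r).2 _ (hp.takeUntil hc)
  · rw [← walkVal_concat_s4 met wf p h]
    exact (hmu c r).2 _ (hp.concat hc h)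

theorem exists_adj_boundary (hbound : MetBounded met) (hmono : MetMonotonic met)
    (hmu : IsMaxMetric met wf G mr mu) {r a b : V} (S : Set V) (p : G.Walk a b) {m : M}
    (ha : a ∈ S) (hb : b ∉ S) (hm : m ≤ mu a r) :
    ∃ x ∈ S, ∃ y ∉ S, G.Adj x y ∧ walkVal met wf p m ≤ met (mu x r) (wf x y) := by
  induction p generalizing m with
  | nil => exact absurd ha hb
  | @cons a c b h q ih =>
    by_cases hc : c ∈ S
    · exact ih hc hb ((hmono _ _ _ hm).trans (hmu.met_le_of_adj hbound h))
    · exact ⟨a, ha, c, hc, h, (hbound.walkVal_le wf q _).trans (hmono _ _ _ hm)⟩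

theorem exists_isPath_isMaxPrefixWalk [Finite V] (hbound : MetBounded met)
    (hmono : MetMonotonic met) (hmu : IsMaxMetric met wf G mr mu) (r v : V) : ∃ q : G.Walk r v, q.IsPath ∧ IsMaxPrefixWalk met wf mr mu q := by
  set good : Set V := {u | ∃ q : G.Walk r u, q.IsPath ∧ IsMaxPrefixWalk met wf mr mu q}
  suffices ∀ u, u ∈ good from this v
  by_contra! ⟨v₀, hv₀⟩
  obtain ⟨v, hv, hvmax⟩ := goodᶜ.exists_max_image (mu · r) (Set.toFinite _) ⟨v₀, hv₀⟩
  have hrr := hmu.self_eq hbound r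
  have hr : r ∈ good := ⟨nil, IsPath.nil, isMaxPrefixWalk_nil hrr⟩
  obtain ⟨⟨p, -, hp⟩, -⟩ := hmu v r
  obtain ⟨x, hx, y, hy, hxy, hle⟩ :=
    hmu.exists_adj_boundary hbound hmono good p hr hv hrr.ge
  refine hy (exists_isPath_isMaxPrefixWalk_of_adj hx hxy ?_)
  refine le_antisymm (hmu.met_le_of_adj hbound hxy) ?_
  calc mu y r ≤ mu v r := hvmax y hy
    _ = walkVal met wf p mr := hp.symm
    _ ≤ met (mu x r) (wf x y) := hle

end IsMaxMetric

theorem statement_4_general {M W V : Type} [LinearOrder M] [Fintype V]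
    (met : M → W → M) (mr : M)
    (hbound : MetBounded met) (hmono : MetMonotonic met)
    (G : SimpleGraph V) (r : V)
    (wf : V → V → W)
    (mu : V → V → M) (hmu : IsMaxMetric met wf G mr mu)
    (v : V) :
    ∃ q : G.Walk r v, q.IsPath ∧
      ∀ (u : V) (q₁ : G.Walk r u) (q₂ : G.Walk u v),
        q = q₁.append q₂ → walkVal met wf q₁ mr = mu u r :=
  hmu.exists_isPath_isMaxPrefixWalk hbound hmono r v

/-- For a bounded monotonic metric assigned over a finite connected
system with root `r`, for every `v ≠ r` there is a simple path from `r` to `v`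
every prefix of which realizes the maximum metric of its endpoint. -/
theorem statement_4 {M W V : Type} [LinearOrder M] [Fintype V]
    (met : M → W → M) (mr : M) (hmr : ∀ m : M, m ≤ mr)
    (hbound : MetBounded met) (hmono : MetMonotonic met)
    (G : SimpleGraph V) (hconn : G.Connected) (r : V)
    (wf : V → V → W) (hwf : ∀ u v : V, wf u v = wf v u)
    (mu : V → V → M) (hmu : IsMaxMetric met wf G mr mu)
    (v : V) (hv : v ≠ r) :
    ∃ q : G.Walk r v, q.IsPath ∧
      ∀ (u : V) (q₁ : G.Walk r u) (q₂ : G.Walk u v),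
        q = q₁.append q₂ → walkVal met wf q₁ mr = mu u r :=
  statement_4_general met mr hbound hmono G r wf mu hmu v
end

section
/- Let (M,W,met,mr,≺) be a bounded routing metric and let m ∈ M with m ≠ mr. If there exist weights w_0,…,w_{k−1} ∈ W and values m_0 = mr, m_1, …, m_k = m with m_i = met(m_{i−1},w_{i−1}) for all i, then there exist weights w'_0,…,w'_{j−1} ∈ W (with j ≤ k) and values m'_0 = mr, m'_1, …, m'_j = m such that m'_i = met(m'_{i−1},w'_{i−1}) and m'_i ≺ m'_{i−1} for all i ∈ {1,…,j}; i.e., a shortest met-chain from mr to m is strictly decreasing. -/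
lemma take_succ_foldl {M W : Type} (met : M → W → M) (mr : M) (ws : List W) (i : Nat)
    (h : i < ws.length) :
    (ws.take (i+1)).foldl met mr = met ((ws.take i).foldl met mr) (ws.get ⟨i, h⟩) := by
  rw [List.take_succ, List.foldl_append]
  have : ws[i]? = some (ws.get ⟨i, h⟩) := by
    simp [List.getElem?_eq_getElem h]
  simp [this]

lemma aux {M W : Type} [LinearOrder M]
    (met : M → W → M) (mr : M)
    (hbound : MetBounded met) :
    ∀ n (ws : List W), ws.length = n →
    ∃ ws' : List W, ws'.length ≤ ws.length ∧ ws'.foldl met mr = ws.foldl met mr ∧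
      ∀ i < ws'.length,
        (ws'.take (i + 1)).foldl met mr < (ws'.take i).foldl met mr := by
  intro n
  induction n using Nat.strong_induction_on with
  | _ n IH =>
    intro ws hlen
    by_cases hall : ∀ i (h : i < ws.length),
        (ws.take (i + 1)).foldl met mr < (ws.take i).foldl met mr
    · exact ⟨ws, le_refl _, rfl, fun i h => hall i h⟩
    · push_neg at hall
      obtain ⟨i, hi, hnot⟩ := hall
      have heq : (ws.take (i+1)).foldl met mr = (ws.take i).foldl met mr := by
        have hle : (ws.take (i+1)).foldl met mr ≤ (ws.take i).foldl met mr := by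
          rw [take_succ_foldl met mr ws i hi]
          exact hbound _ _
        exact le_antisymm hle hnot
      set ws₂ : List W := ws.take i ++ ws.drop (i+1) with hws₂
      have hlen₂ : ws₂.length < n := by
        have : ws₂.length = i + (ws.length - (i+1)) := by
          simp [hws₂, List.length_take, Nat.min_eq_left (le_of_lt hi)]
        omega
      have hfold₂ : ws₂.foldl met mr = ws.foldl met mr := by
        conv_rhs => rw [← List.take_append_drop (i+1) ws]
        rw [hws₂, List.foldl_append, List.foldl_append, heq]
      obtain ⟨ws', h1, h2, h3⟩ := IH ws₂.length hlen₂ ws₂ rfl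
      exact ⟨ws', by omega, h2.trans hfold₂, h3⟩


/-- In a bounded routing metric, any `met`-chain from `mr` to `m ≠ mr`
can be shortened to a strictly decreasing `met`-chain from `mr` to `m`. -/
theorem statement_8 {M W : Type} [LinearOrder M]
    (met : M → W → M) (mr : M) (hmr : ∀ m : M, m ≤ mr)
    (hbound : MetBounded met)
    (m : M) (hm : m ≠ mr)
    (ws : List W) (hws : ws.foldl met mr = m) :
    ∃ ws' : List W, ws'.length ≤ ws.length ∧ ws'.foldl met mr = m ∧
      ∀ i < ws'.length,
        (ws'.take (i + 1)).foldl met mr < (ws'.take i).foldl met mr := by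
  obtain ⟨ws', h1, h2, h3⟩ := aux met mr hbound ws.length ws rfl
  exact ⟨ws', h1, h2.trans hws, h3⟩
end

section
/- Let (M,W,met,mr,≺) be a routing metric with M finite and W nonempty. If the metric is strictly decreasing and has exactly one fixed point Υ, then Υ is the minimum of M with respect to ≺; in particular Υ ⪯ m for every m ∈ M. -/
/-- A strictly decreasing routing metric with `M` finite, `W` nonempty
and exactly one fixed point `Υ` has `Υ` as minimum of `M`. -/
theorem statement_9 {M W : Type} [LinearOrder M] [Finite M] [Nonempty W]
    (met : M → W → M) (mr : M) (hmr : ∀ m : M, m ≤ mr)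
    (hsd : MetStrictlyDecreasing met)
    (Υ : M) (hfix : IsMetFixedPoint met Υ)
    (huniq : ∀ m : M, IsMetFixedPoint met m → m = Υ) :
    ∀ m : M, Υ ≤ m := by
  have : Nonempty M := ⟨Υ⟩
  obtain ⟨m₀, hm₀⟩ := Finite.exists_min (id : M → M)
  have hfp : IsMetFixedPoint met m₀ := by
    rcases hsd m₀ with h | h
    · obtain ⟨w⟩ := ‹Nonempty W›
      exact absurd (hm₀ (met m₀ w)) (not_le.mpr (h w))
    · exact h
  intro m
  exact huniq m₀ hfp ▸ hm₀ m
end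

section
/- Let (M,W,met,mr,≺) be a routing metric with M finite that is strictly decreasing and has exactly one fixed point Υ. Then for every finite sequence of weights w_0, …, w_{k−1} ∈ W with k ≥ |M| − 1, the iterated value m_k defined by m_0 = mr and m_i = met(m_{i−1}, w_{i−1}) satisfies m_k = Υ. -/
lemma foldl_fix {M W : Type} (met : M → W → M) (Υ : M) (hfix : IsMetFixedPoint met Υ) :
    ∀ ws : List W, ws.foldl met Υ = Υ := by
  intro ws
  induction ws with
  | nil => rfl
  | cons w ws ih => simpa [List.foldl, hfix w] using ih

lemma aux_s10 {M W : Type} [LinearOrder M] [Finite M]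
    (met : M → W → M)
    (hsd : MetStrictlyDecreasing met)
    (Υ : M) (hfix : IsMetFixedPoint met Υ)
    (huniq : ∀ m : M, IsMetFixedPoint met m → m = Υ) :
    ∀ ws : List W, ∀ m : M, {x : M | x < m}.ncard ≤ ws.length → ws.foldl met m = Υ := by
  intro ws
  induction ws with
  | nil =>
    intro m hm
    simp only [List.length_nil, Nat.le_zero] at hm
    have hfin : {x : M | x < m}.Finite := Set.toFinite _
    have hempty : {x : M | x < m} = ∅ := (Set.ncard_eq_zero hfin).mp hm
    apply huniq
    intro w
    rcases hsd m with h | h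
    · exact absurd (h w) (by
        intro hlt
        have : met m w ∈ {x : M | x < m} := hlt
        simp [hempty] at this)
    · exact h w
  | cons w ws ih =>
    intro m hm
    rcases hsd m with h | h
    · have hlt : met m w < m := h w
      have hsub : {x : M | x < met m w} ⊂ {x : M | x < m} := by
        constructor
        · intro x hx; exact lt_trans hx hlt
        · intro hc
          exact absurd (hc hlt) (lt_irrefl _)
      have hcard : {x : M | x < met m w}.ncard < {x : M | x < m}.ncard :=
        Set.ncard_lt_ncard hsub (Set.toFinite _)
      have : {x : M | x < met m w}.ncard ≤ ws.length := by
        simp only [List.length_cons] at hm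
        omega
      simpa [List.foldl] using ih (met m w) this
    · rw [List.foldl, h w, huniq m h]
      exact foldl_fix met Υ hfix _

/-- For a strictly decreasing routing metric with `M` finite and
exactly one fixed point `Υ`, iterating `met` from `mr` along any sequence of at least
`|M| − 1` weights ends at `Υ`. -/
theorem statement_10 {M W : Type} [LinearOrder M] [Finite M]
    (met : M → W → M) (mr : M) (hmr : ∀ m : M, m ≤ mr)
    (hsd : MetStrictlyDecreasing met)
    (Υ : M) (hfix : IsMetFixedPoint met Υ)
    (huniq : ∀ m : M, IsMetFixedPoint met m → m = Υ) :
    ∀ ws : List W, Nat.card M - 1 ≤ ws.length → ws.foldl met mr = Υ := by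
  intro ws hlen
  apply aux_s10 met hsd Υ hfix huniq
  have hsub : {x : M | x < mr} ⊆ Set.univ \ {mr} := by
    intro x hx
    exact ⟨trivial, fun hc => absurd hx (by simp [Set.mem_singleton_iff.mp hc])⟩
  have h1 : {x : M | x < mr}.ncard ≤ (Set.univ \ {mr} : Set M).ncard :=
    Set.ncard_le_ncard hsub (Set.toFinite _)
  have h2 : (Set.univ \ {mr} : Set M).ncard = Nat.card M - 1 := by
    rw [Set.ncard_diff (by simp) (Set.toFinite _)]
    simp [Set.ncard_univ]
  omega
end

section
/- Let a routing metric be assigned over a finite connected system S with root r and nonempty Byzantine set B ⊆ V∖{r}, let w ∈ W, and suppose m = met(mr,w) is a fixed point of the metric. If every edge of S incident to r has weight w and every edge of S incident to a vertex of B has weight w, then for every vertex v ∉ B∪{r} one has μ(v,r) = m and μ(v,b) = m for every b ∈ B with v ≠ b; consequently S_B^* = ∅. -/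
lemma walkVal_fixed {M W V : Type} (met : M → W → M) (wf : V → V → W)
    {G : SimpleGraph V} {m : M} (hfp : IsMetFixedPoint met m) :
    ∀ {u v : V} (q : G.Walk u v), walkVal met wf q m = m := by
  intro u v q
  induction q with
  | nil => rfl
  | cons h q ih => rw [walkVal, hfp, ih]

/-- If `m = met(mr,w)` is a fixed point and every edge incident to `r`
or to a Byzantine vertex has weight `w`, then every vertex `v ∉ B∪{r}` has
`μ(v,r) = m` and `μ(v,b) = m` for every `b ∈ B`; consequently `S_B^* = ∅`. -/
theorem statement_15 {M W V : Type} [LinearOrder M] [Fintype V] [Nontrivial V]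
    (met : M → W → M) (mr : M) (hmr : ∀ m' : M, m' ≤ mr)
    (G : SimpleGraph V) (hconn : G.Connected) (r : V)
    (wf : V → V → W) (hwf : ∀ u v : V, wf u v = wf v u)
    (mu : V → V → M) (hmu : IsMaxMetric met wf G mr mu)
    (B : Finset V) (hrB : r ∉ B) (hBne : B.Nonempty)
    (w : W) (m : M) (hm : m = met mr w) (hfp : IsMetFixedPoint met m)
    (hredge : ∀ u : V, G.Adj r u → wf r u = w)
    (hBedge : ∀ b ∈ B, ∀ u : V, G.Adj b u → wf b u = w) :
    (∀ v : V, v ∉ B → v ≠ r → mu v r = m ∧ ∀ b ∈ B, mu v b = m) ∧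
    {v : V | v ∉ B ∧ mu v r < B.sup' hBne (fun b => mu v b)} = ∅ := by
  have hval : ∀ (p v : V), p ≠ v → (∀ u, G.Adj p u → wf p u = w) →
      ∀ q : G.Walk p v, walkVal met wf q mr = m := by
    intro p v hpv hp q
    cases q with
    | nil => exact absurd rfl hpv
    | cons h q =>
      simp only [walkVal, hp _ h, ← hm, walkVal_fixed met wf hfp]
  have hmuval : ∀ (p v : V), p ≠ v → (∀ u, G.Adj p u → wf p u = w) →
      mu v p = m := by
    intro p v hpv hp
    obtain ⟨⟨q, _, hq⟩, _⟩ := hmu v p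
    rw [← hq, hval p v hpv hp]
  have hmain : ∀ v : V, v ∉ B → v ≠ r → mu v r = m ∧ ∀ b ∈ B, mu v b = m := by
    intro v hvB hvr
    refine ⟨hmuval r v (Ne.symm hvr) hredge, fun b hb => ?_⟩
    exact hmuval b v (fun h => hvB (h ▸ hb)) (hBedge b hb)
  refine ⟨hmain, ?_⟩
  ext v
  simp only [Set.mem_setOf_eq, Set.mem_empty_iff_false, iff_false, not_and, not_lt]
  intro hvB
  by_cases hvr : v = r
  · subst hvr
    have hmm : mu v v = mr := by
      obtain ⟨_, h2⟩ := hmu v v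
      have := h2 SimpleGraph.Walk.nil SimpleGraph.Walk.IsPath.nil
      exact le_antisymm (hmr _) this
    have : B.sup' hBne (fun b => mu v b) = m := by
      apply le_antisymm
      · exact Finset.sup'_le _ _ fun b hb =>
          le_of_eq (hmuval b v (fun h => hrB (h ▸ hb)) (hBedge b hb))
      · obtain ⟨b, hb⟩ := hBne
        exact le_trans (le_of_eq (hmuval b v (fun h => hrB (h ▸ hb)) (hBedge b hb)).symm)
          (Finset.le_sup' _ hb)
    rw [this, hmm]
    exact hmr m
  · obtain ⟨h1, h2⟩ := hmain v hvB hvr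
    rw [h1]
    exact Finset.sup'_le _ _ fun b hb => le_of_eq (h2 b hb)
end
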